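/- Let 3/2 < β ≤ 2. Then there exists a constant C > 0 such that for every real Λ ≥ 2 and every p ∈ ℤ², ∑_{q ∈ ℤ², 1+|q|² ≤ Λ²} (1+|q−p|²)^{−β/2} ≤ C · (1+log Λ) · Λ^{2−β}. -/

import Mathlib

open scoped ENNReal

/-- Squared Euclidean norm on `ℤ²`. -/
noncomputable def nsq (p : ℤ × ℤ) : ℝ := (p.1 : ℝ) ^ 2 + (p.2 : ℝ) ^ 2

/-!
Decompose `ℤ²` into the sup-norm shells `box k`: the shell `k ≥ 1` has `8k` points, on each of
which `(1 + |r|²)^{-β/2} ≤ k^{-β}`, so it contributes `8 k^{1-β} ≤ 8 n^{2-β} / k` to the sum over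
the centred box of radius `n = ⌊Λ⌋`, and the shells add up to `O(n^{2-β} log n)`. After translating
the disk by `-p`, the points landing in that box are bounded by the centred box sum, while the at
most `(2n+1)² ≤ 9Λ²` points landing outside it have `|r| > Λ`, hence weight at most `Λ^{-β}`.
-/

open Finset

namespace Finset

variable {α M : Type*} [Ring α] [PartialOrder α] [IsOrderedRing α] [LocallyFiniteOrder α]
  [DecidableEq α] [AddCommMonoid M]

theorem sum_Icc_neg_natCast_eq_sum_box (f : α → M) (n : ℕ) :
    ∑ x ∈ Icc (-n : α) n, f x = ∑ k ∈ range (n + 1), ∑ x ∈ box k, f x := by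
  induction n with
  | zero => simp
  | succ n ih =>
    rw [sum_range_succ, ← ih, ← box_succ_disjUnion, sum_disjUnion, add_comm]

end Finset

theorem Int.mem_Icc_neg_natCast_iff {q : ℤ × ℤ} {n : ℕ} :
    q ∈ Icc (-n : ℤ × ℤ) n ↔ max q.1.natAbs q.2.natAbs ≤ n := by
  simp only [mem_Icc, Prod.le_def, Prod.fst_neg, Prod.snd_neg, Prod.fst_natCast,
    Prod.snd_natCast]
  omega

theorem Int.card_Icc_neg_natCast (n : ℕ) : #(Icc (-n : ℤ × ℤ) n) = (2 * n + 1) ^ 2 := by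
  rw [card_Icc_prod]
  simp only [Prod.fst_neg, Prod.snd_neg, Prod.fst_natCast, Prod.snd_natCast, Int.card_Icc]
  have : ((n : ℤ) + 1 - -(n : ℤ)).toNat = 2 * n + 1 := by omega
  rw [this, sq]

theorem sq_max_natAbs_le_nsq (q : ℤ × ℤ) : ((max q.1.natAbs q.2.natAbs : ℕ) : ℝ) ^ 2 ≤ nsq q := by
  have (x : ℤ) : ((x.natAbs : ℕ) : ℝ) ^ 2 = (x : ℝ) ^ 2 := by
    rw [Nat.cast_natAbs, Int.cast_abs, sq_abs]
  rcases max_choice q.1.natAbs q.2.natAbs with h | h <;> rw [h, this, nsq]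
  · exact le_add_of_nonneg_right (sq_nonneg _)
  · exact le_add_of_nonneg_left (sq_nonneg _)

theorem mem_Icc_floor_of_one_add_nsq_le {Λ : ℝ} (hΛ : 0 ≤ Λ) {q : ℤ × ℤ}
    (hq : 1 + nsq q ≤ Λ ^ 2) : q ∈ Icc (-⌊Λ⌋₊ : ℤ × ℤ) ⌊Λ⌋₊ := by
  rw [Int.mem_Icc_neg_natCast_iff, Nat.le_floor_iff hΛ]
  rw [← pow_le_pow_iff_left₀ (Nat.cast_nonneg _) hΛ two_ne_zero]
  linarith [sq_max_natAbs_le_nsq q]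

theorem sq_le_one_add_nsq_of_notMem_Icc_floor {Λ : ℝ} (hΛ : 0 ≤ Λ) {r : ℤ × ℤ}
    (hr : r ∉ Icc (-⌊Λ⌋₊ : ℤ × ℤ) ⌊Λ⌋₊) : Λ ^ 2 ≤ 1 + nsq r := by
  rw [Int.mem_Icc_neg_natCast_iff, not_le, ← Nat.add_one_le_iff] at hr
  have hΛr : Λ ≤ (max r.1.natAbs r.2.natAbs : ℕ) :=
    (Nat.lt_floor_add_one Λ).le.trans (by exact_mod_cast hr)
  nlinarith [sq_max_natAbs_le_nsq r]

theorem card_le_of_forall_one_add_nsq_le {Λ : ℝ} (hΛ : 1 ≤ Λ) {s : Finset (ℤ × ℤ)}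
    (hs : ∀ q ∈ s, 1 + nsq q ≤ Λ ^ 2) : (#s : ℝ) ≤ 9 * Λ ^ 2 := by
  have hsB : #s ≤ (2 * ⌊Λ⌋₊ + 1) ^ 2 := by
    rw [← Int.card_Icc_neg_natCast]
    exact card_le_card fun q hq => mem_Icc_floor_of_one_add_nsq_le (by linarith) (hs q hq)
  have hn : (⌊Λ⌋₊ : ℝ) ≤ Λ := Nat.floor_le (by linarith)
  have : (#s : ℝ) ≤ (2 * ⌊Λ⌋₊ + 1) ^ 2 := by exact_mod_cast hsB
  nlinarith

noncomputable def besselCoeff (β : ℝ) (r : ℤ × ℤ) : ℝ := (1 + nsq r) ^ (-(β / 2))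

theorem besselCoeff_nonneg (β : ℝ) (r : ℤ × ℤ) : 0 ≤ besselCoeff β r := by
  unfold besselCoeff nsq; positivity

theorem besselCoeff_zero (β : ℝ) : besselCoeff β 0 = 1 := by
  simp [besselCoeff, nsq]

section besselCoeff

variable {β : ℝ}

theorem besselCoeff_le_rpow_neg (hβ : 0 ≤ β) {r : ℤ × ℤ} {a : ℝ} (ha : 0 < a)
    (h : a ^ 2 ≤ 1 + nsq r) : besselCoeff β r ≤ a ^ (-β) := by
  calc besselCoeff β r ≤ (a ^ 2) ^ (-(β / 2)) :=
        Real.rpow_le_rpow_of_nonpos (by positivity) h (by linarith)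
    _ = a ^ (-β) := by
        rw [← Real.rpow_natCast, ← Real.rpow_mul ha.le]
        ring_nf

theorem sum_box_besselCoeff_le (hβ : 0 ≤ β) {k : ℕ} (hk : k ≠ 0) :
    ∑ r ∈ box k, besselCoeff β r ≤ 8 * (k : ℝ) ^ (1 - β) := by
  have hk0 : (0 : ℝ) < k := by positivity
  have hterm (r) (hr : r ∈ box k) : besselCoeff β r ≤ (k : ℝ) ^ (-β) := by
    refine besselCoeff_le_rpow_neg hβ hk0 ?_
    rw [← Int.mem_box.mp hr]
    linarith [sq_max_natAbs_le_nsq r]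
  calc ∑ r ∈ box k, besselCoeff β r ≤ #(box k : Finset (ℤ × ℤ)) * (k : ℝ) ^ (-β) := by
        simpa using sum_le_card_nsmul _ _ _ hterm
    _ = 8 * (k : ℝ) ^ (1 - β) := by
        rw [Int.card_box hk, Nat.cast_mul, mul_assoc, sub_eq_add_neg, Real.rpow_add hk0,
          Real.rpow_one]
        norm_num

theorem sum_Icc_besselCoeff_le (hβ0 : 0 ≤ β) (hβ2 : β ≤ 2) (n : ℕ) :
    ∑ r ∈ Icc (-n : ℤ × ℤ) n, besselCoeff β r ≤ 1 + 8 * (n : ℝ) ^ (2 - β) * (1 + Real.log n) := by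
  have hshell (k : ℕ) (hk : k < n) :
      ∑ r ∈ box (k + 1), besselCoeff β r ≤ 8 * (n : ℝ) ^ (2 - β) * ((k + 1 : ℕ) : ℝ)⁻¹ := by
    have hk0 : (0 : ℝ) < (k + 1 : ℕ) := by positivity
    calc ∑ r ∈ box (k + 1), besselCoeff β r ≤ 8 * ((k + 1 : ℕ) : ℝ) ^ (1 - β) :=
          sum_box_besselCoeff_le hβ0 k.succ_ne_zero
      _ = 8 * ((k + 1 : ℕ) : ℝ) ^ (2 - β) * ((k + 1 : ℕ) : ℝ)⁻¹ := by
          rw [mul_assoc, ← Real.rpow_neg_one, ← Real.rpow_add hk0]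
          ring_nf
      _ ≤ 8 * (n : ℝ) ^ (2 - β) * ((k + 1 : ℕ) : ℝ)⁻¹ := by
          gcongr
          linarith
  have hharmonic : ∑ k ∈ range n, ((k + 1 : ℕ) : ℝ)⁻¹ ≤ 1 + Real.log n := by
    simpa [harmonic] using harmonic_le_one_add_log n
  rw [sum_Icc_neg_natCast_eq_sum_box, sum_range_succ', box_zero, sum_singleton,
    besselCoeff_zero, add_comm]
  calc 1 + ∑ k ∈ range n, ∑ r ∈ box (k + 1), besselCoeff β r
      ≤ 1 + ∑ k ∈ range n, 8 * (n : ℝ) ^ (2 - β) * ((k + 1 : ℕ) : ℝ)⁻¹ := by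
        gcongr with k hk
        exact hshell k (mem_range.mp hk)
    _ ≤ 1 + 8 * (n : ℝ) ^ (2 - β) * (1 + Real.log n) := by
        rw [← mul_sum]
        gcongr

theorem sum_besselCoeff_sub_le {Λ : ℝ} (hβ0 : 0 ≤ β) (hβ2 : β ≤ 2) (hΛ : 1 ≤ Λ)
    (s : Finset (ℤ × ℤ)) (hs : ∀ q ∈ s, 1 + nsq q ≤ Λ ^ 2) (p : ℤ × ℤ) :
    ∑ q ∈ s, besselCoeff β (q - p) ≤ 18 * (1 + Real.log Λ) * Λ ^ (2 - β) := by
  have hΛ0 : 0 < Λ := by linarith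
  set n := ⌊Λ⌋₊
  set B := Icc (-n : ℤ × ℤ) n
  set t := s.image (· - p)
  have hn : (n : ℝ) ≤ Λ := Nat.floor_le hΛ0.le
  have hlog : 0 ≤ Real.log Λ := Real.log_nonneg hΛ
  have hX : 1 ≤ Λ ^ (2 - β) := Real.one_le_rpow hΛ (by linarith)
  have hinside : ∑ r ∈ t ∩ B, besselCoeff β r ≤ 1 + 8 * Λ ^ (2 - β) * (1 + Real.log Λ) := by
    calc ∑ r ∈ t ∩ B, besselCoeff β r ≤ ∑ r ∈ B, besselCoeff β r :=
          sum_le_sum_of_subset_of_nonneg inter_subset_right fun r _ _ => besselCoeff_nonneg β r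
      _ ≤ 1 + 8 * (n : ℝ) ^ (2 - β) * (1 + Real.log n) := sum_Icc_besselCoeff_le hβ0 hβ2 n
      _ ≤ 1 + 8 * Λ ^ (2 - β) * (1 + Real.log Λ) := by
          have hn1 : (0 : ℝ) < n := by exact_mod_cast Nat.floor_pos.mpr hΛ
          gcongr
  have houtside : ∑ r ∈ t \ B, besselCoeff β r ≤ 9 * Λ ^ (2 - β) := by
    have hterm (r) (hr : r ∈ t \ B) : besselCoeff β r ≤ Λ ^ (-β) :=
      besselCoeff_le_rpow_neg hβ0 hΛ0
        (sq_le_one_add_nsq_of_notMem_Icc_floor hΛ0.le (mem_sdiff.mp hr).2)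
    calc ∑ r ∈ t \ B, besselCoeff β r ≤ #(t \ B) * Λ ^ (-β) := by
          simpa using sum_le_card_nsmul _ _ _ hterm
      _ ≤ 9 * Λ ^ 2 * Λ ^ (-β) := by
          gcongr
          calc (#(t \ B) : ℝ) ≤ #s := by
                exact_mod_cast (card_le_card sdiff_subset).trans card_image_le
            _ ≤ 9 * Λ ^ 2 := card_le_of_forall_one_add_nsq_le hΛ hs
      _ = 9 * Λ ^ (2 - β) := by
          rw [mul_assoc, ← Real.rpow_natCast, ← Real.rpow_add hΛ0]
          ring_nf
  calc ∑ q ∈ s, besselCoeff β (q - p) = ∑ r ∈ t, besselCoeff β r :=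
        (sum_image fun _ _ _ _ h => sub_left_injective h).symm
    _ = ∑ r ∈ t ∩ B, besselCoeff β r + ∑ r ∈ t \ B, besselCoeff β r :=
        (sum_inter_add_sum_sdiff t B _).symm
    _ ≤ 18 * (1 + Real.log Λ) * Λ ^ (2 - β) := by nlinarith

end besselCoeff

/-- Uniform low-frequency sum of the fractional-Bessel Fourier coefficients:
for `3/2 < β ≤ 2`, `∑_{h(q) ≤ Λ²} (1+|q-p|²)^{-β/2} ≤ C (1+log Λ) Λ^{2-β}`,
uniformly in the translation `p`. -/
theorem bessel_low_frequency_sum_uniform (β : ℝ) (hβ1 : 3 / 2 < β) (hβ2 : β ≤ 2) :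
    ∃ C : ℝ, 0 < C ∧ ∀ Λ : ℝ, 2 ≤ Λ → ∀ p : ℤ × ℤ,
      ∑' q : {q : ℤ × ℤ // 1 + nsq q ≤ Λ ^ 2},
        ENNReal.ofReal ((1 + nsq (q.1 - p)) ^ (-(β / 2))) ≤
      ENNReal.ofReal (C * (1 + Real.log Λ) * Λ ^ (2 - β)) := by
  refine ⟨18, by norm_num, fun Λ hΛ p => ENNReal.summable.tsum_le_of_sum_le fun u => ?_⟩
  rw [← ENNReal.ofReal_sum_of_nonneg fun q _ => besselCoeff_nonneg β (q.1 - p)]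
  refine ENNReal.ofReal_le_ofReal ?_
  have hu : ∀ q ∈ u.map (Function.Embedding.subtype _), 1 + nsq q ≤ Λ ^ 2 := by
    simp only [mem_map]
    rintro _ ⟨q, -, rfl⟩
    exact q.2
  have := sum_besselCoeff_sub_le (by linarith) hβ2 (by linarith) _ hu p
  rwa [sum_map] at this
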